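/- arXiv:1410.7807 — 2 statements merged into one kernel-verified Lean document; each statement's English description precedes it below -/
import Mathlib

section
/- One-sided pointwise bound for the Bessel kernel gradient (Lemma 1, inequality (3.9)): For every γ ≥ 0 and every r > 0, the radial profile g_γ(r) = (r²/4) ∫₀^∞ e^{−γs} s^{−2} e^{−r²/(4s)} ds satisfies g_γ(r) ≥ e^{−√γ r}. Equivalently, x · ∇K_γ(x) ≤ −(1/(2π)) e^{−√γ ‖x‖} for all x ≠ 0, where ∇K_γ(x) = −(1/(2π)) (x/‖x‖²) g_γ(‖x‖) and · is the Euclidean inner product on ℝ². -/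
open MeasureTheory Real Set
open scoped ENNReal InnerProductSpace

noncomputable section

/-- The Euclidean plane `ℝ²`. -/
abbrev Plane : Type := EuclideanSpace ℝ (Fin 2)

/-- The radial profile `g_γ(r) = (r²/4) ∫₀^∞ e^{−γ s} s^{−2} e^{−r²/(4s)} ds` of the
gradient of the Bessel kernel of `(−Δ+γ)⁻¹` on `ℝ²`. -/
def besselProfile (γ r : ℝ) : ℝ :=
  (r ^ 2 / 4) * ∫ s in Ioi (0 : ℝ), exp (-γ * s) * s ^ (-2 : ℝ) * exp (-r ^ 2 / (4 * s))

/-- The gradient of the Bessel kernel expressed through its radial profile: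
`∇K_γ(x) = −(1/(2π)) (x/‖x‖²) g_γ(‖x‖)`. -/
def gradKp (γ : ℝ) (x : Plane) : Plane :=
  (-(2 * π)⁻¹ * besselProfile γ ‖x‖ / ‖x‖ ^ 2) • x

/-! The substitution `u = 1/s` turns the profile into `g_γ(r) = c ∫₀^∞ e^{−γ/u} e^{−c u} du` with
`c = r²/4`. On the tail `u > U = 2√γ/r` the factor `e^{−γ/u}` is at least `e^{−√γ r/2}`, while
`c ∫_U^∞ e^{−c u} du = e^{−c U} = e^{−√γ r/2}`; the product of the two is `e^{−√γ r}`. -/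

theorem besselProfile_eq_integral_inv (γ r : ℝ) :
    besselProfile γ r = r ^ 2 / 4 * ∫ u in Ioi (0 : ℝ), exp (-γ / u) * exp (-(r ^ 2 / 4) * u) := by
  rw [besselProfile, ← integral_comp_rpow_Ioi (fun u => exp (-γ / u) * exp (-(r ^ 2 / 4) * u))
    (neg_ne_zero.2 one_ne_zero)]
  refine congrArg _ (setIntegral_congr_fun measurableSet_Ioi fun s (hs : 0 < s) => ?_)
  rw [show (-1 : ℝ) - 1 = -2 by norm_num, rpow_neg_one, abs_neg, abs_one, one_mul, smul_eq_mul,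
    div_inv_eq_mul, show -r ^ 2 / (4 * s) = -(r ^ 2 / 4) * s⁻¹ by ring]
  ring

theorem exp_neg_le_mul_integral_exp_neg_div_mul_exp {γ c U M : ℝ} (hγ : 0 ≤ γ) (hc : 0 < c)
    (hU : 0 ≤ U) (hM : ∀ u > U, γ / u ≤ M) :
    exp (-(M + c * U)) ≤ c * ∫ u in Ioi (0 : ℝ), exp (-γ / u) * exp (-c * u) := by
  have hdom : IntegrableOn (fun u => exp (-c * u)) (Ioi 0) :=
    integrableOn_exp_mul_Ioi (neg_neg_of_pos hc) 0
  have hint : IntegrableOn (fun u => exp (-γ / u) * exp (-c * u)) (Ioi 0) := by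
    refine hdom.mono' (by fun_prop) ?_
    filter_upwards [ae_restrict_mem measurableSet_Ioi] with u (hu : 0 < u)
    rw [norm_of_nonneg (by positivity)]
    exact mul_le_of_le_one_left (exp_pos _).le
      (exp_le_one_iff.2 (div_nonpos_of_nonpos_of_nonneg (neg_nonpos.2 hγ) hu.le))
  have htail : exp (-M) * exp (-c * U) / c ≤ ∫ u in Ioi U, exp (-γ / u) * exp (-c * u) := by
    have hexp : ∫ u in Ioi U, exp (-M) * exp (-c * u) = exp (-M) * exp (-c * U) / c := by
      rw [integral_const_mul, integral_exp_mul_Ioi (neg_neg_of_pos hc), neg_div_neg_eq,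
        mul_div_assoc]
    rw [← hexp]
    refine setIntegral_mono_on ((hdom.mono_set (Ioi_subset_Ioi hU)).const_mul _)
      (hint.mono_set (Ioi_subset_Ioi hU)) measurableSet_Ioi fun u hu => ?_
    gcongr
    rw [neg_div]
    exact neg_le_neg (hM u hu)
  have hsub : ∫ u in Ioi U, exp (-γ / u) * exp (-c * u) ≤
      ∫ u in Ioi (0 : ℝ), exp (-γ / u) * exp (-c * u) :=
    setIntegral_mono_set hint (ae_of_all _ fun u => by positivity) (Ioi_subset_Ioi hU).eventuallyLE
  calc exp (-(M + c * U)) = c * (exp (-M) * exp (-c * U) / c) := by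
        rw [mul_div_cancel₀ _ hc.ne', ← exp_add]; ring_nf
    _ ≤ _ := by gcongr; exact htail.trans hsub

theorem exp_neg_sqrt_mul_le_besselProfile {γ r : ℝ} (hγ : 0 ≤ γ) (hr : 0 < r) :
    exp (-√γ * r) ≤ besselProfile γ r := by
  have hM : ∀ u > 2 * √γ / r, γ / u ≤ √γ * r / 2 := fun u hu => by
    have hu₀ : 0 < u := lt_of_le_of_lt (by positivity) hu
    rw [gt_iff_lt, div_lt_iff₀ hr] at hu
    rw [div_le_iff₀ hu₀]
    nlinarith [sq_sqrt hγ, sqrt_nonneg γ]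
  convert exp_neg_le_mul_integral_exp_neg_div_mul_exp hγ (by positivity : 0 < r ^ 2 / 4)
    (by positivity) hM using 1
  · field_simp
    ring_nf
  · rw [besselProfile_eq_integral_inv]

theorem inner_gradKp (γ : ℝ) (x : Plane) :
    ⟪x, gradKp γ x⟫_ℝ = -(2 * π)⁻¹ * besselProfile γ ‖x‖ := by
  rcases eq_or_ne x 0 with rfl | hx
  · simp [gradKp, besselProfile]
  · rw [gradKp, real_inner_smul_right, real_inner_self_eq_norm_sq]
    field_simp

/-- **One-sided pointwise bound for the Bessel kernel gradient** (Lemma 1, (3.9)).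
For every `γ ≥ 0` and `r > 0`, `g_γ(r) ≥ e^{−√γ r}`; equivalently
`x · ∇K_γ(x) ≤ −(1/(2π)) e^{−√γ ‖x‖}` for all `x ≠ 0`. -/
theorem besselProfile_lower_bound (γ : ℝ) (hγ : 0 ≤ γ) :
    (∀ r : ℝ, 0 < r → exp (-Real.sqrt γ * r) ≤ besselProfile γ r) ∧
    (∀ x : Plane, x ≠ 0 → ⟪x, gradKp γ x⟫_ℝ ≤ -(2 * π)⁻¹ * exp (-Real.sqrt γ * ‖x‖)) := by
  refine ⟨fun r hr => exp_neg_sqrt_mul_le_besselProfile hγ hr, fun x hx => ?_⟩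
  rw [inner_gradKp, neg_mul, neg_mul, neg_le_neg_iff]
  gcongr
  exact exp_neg_sqrt_mul_le_besselProfile hγ (norm_pos_iff.2 hx)
end
end

section
/- Monotonicity of the Bessel kernel radial profile (Lemma 7, profile property): For every γ ≥ 0, the function r ↦ g_γ(r) = (r²/4) ∫₀^∞ e^{−γs} s^{−2} e^{−r²/(4s)} ds is antitone (monotone nonincreasing) on (0,∞), and 0 ≤ g_γ(r) ≤ 1 for all r > 0. -/
open MeasureTheory Real Set
open scoped ENNReal InnerProductSpace

noncomputable section

/-!
The substitution `s = r²/(4u)` turns the profile into `g_γ(r) = F(γ r²/4)`, where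
`F(θ) = ∫₀^∞ e^{-u} e^{-θ/u} du`. The integrand of `F` decreases in `θ` and is bounded by
`e^{-u}`, so `F` is nonincreasing and nonnegative on `[0, ∞)` with `F(0) = ∫₀^∞ e^{-u} du = 1`;
since `r ↦ γ r²/4` is nondecreasing on `(0, ∞)` for `γ ≥ 0`, everything follows.
-/

theorem integral_rpow_neg_two_smul_comp_div_Ioi {E : Type*} [NormedAddCommGroup E]
    [NormedSpace ℝ E] (f : ℝ → E) {c : ℝ} (hc : 0 < c) :
    ∫ s in Ioi 0, s ^ (-2 : ℝ) • f (c / s) = c⁻¹ • ∫ u in Ioi 0, f u := by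
  have h := integral_comp_rpow_Ioi (fun y => f (c * y)) (p := -1) (by norm_num)
  rw [integral_comp_mul_left_Ioi f 0 hc, mul_zero] at h
  rw [← h]
  refine setIntegral_congr_fun measurableSet_Ioi fun s _ => ?_
  norm_num [rpow_neg_one, div_eq_mul_inv]

/-- For `θ > 0` this is `2√θ K₁(2√θ)`, so that `g_γ(r) = √γ r K₁(√γ r)`. -/
def expInvIntegral (θ : ℝ) : ℝ :=
  ∫ u in Ioi 0, exp (-u) * exp (-θ / u)

theorem besselProfile_eq_expInvIntegral (γ : ℝ) {r : ℝ} (hr : 0 < r) :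
    besselProfile γ r = expInvIntegral (γ * (r ^ 2 / 4)) := by
  set c := r ^ 2 / 4
  have hc : 0 < c := by positivity
  have hintegrand : ∀ s ∈ Ioi (0 : ℝ), exp (-γ * s) * s ^ (-2 : ℝ) * exp (-r ^ 2 / (4 * s)) =
      s ^ (-2 : ℝ) • (exp (-(c / s)) * exp (-(γ * c) / (c / s))) := by
    intro s hs
    have hs0 : s ≠ 0 := ne_of_gt hs
    have h₁ : -(c / s) = -r ^ 2 / (4 * s) := by simp only [c]; field_simp
    have h₂ : -(γ * c) / (c / s) = -γ * s := by field_simp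
    rw [smul_eq_mul, h₁, h₂]
    ring
  rw [besselProfile, setIntegral_congr_fun measurableSet_Ioi hintegrand,
    integral_rpow_neg_two_smul_comp_div_Ioi (fun u => exp (-u) * exp (-(γ * c) / u)) hc,
    smul_eq_mul, ← mul_assoc, mul_inv_cancel₀ hc.ne', one_mul, expInvIntegral]

theorem exp_neg_div_le_one {θ u : ℝ} (hθ : 0 ≤ θ) (hu : 0 ≤ u) : exp (-θ / u) ≤ 1 :=
  exp_le_one_iff.mpr (div_nonpos_of_nonpos_of_nonneg (neg_nonpos.mpr hθ) hu)

theorem integrableOn_exp_neg_mul_exp_neg_div {θ : ℝ} (hθ : 0 ≤ θ) :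
    IntegrableOn (fun u => exp (-u) * exp (-θ / u)) (Ioi 0) := by
  refine (integrableOn_exp_neg_Ioi 0).mono' (by fun_prop) ?_
  filter_upwards [ae_restrict_mem measurableSet_Ioi] with u hu
  rw [norm_of_nonneg (by positivity)]
  exact mul_le_of_le_one_right (exp_pos _).le (exp_neg_div_le_one hθ (le_of_lt hu))

theorem antitoneOn_expInvIntegral : AntitoneOn expInvIntegral (Ici 0) := by
  intro θ hθ θ' hθ' hle
  refine setIntegral_mono_on (integrableOn_exp_neg_mul_exp_neg_div hθ')
    (integrableOn_exp_neg_mul_exp_neg_div hθ) measurableSet_Ioi fun u hu => ?_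
  gcongr
  exact le_of_lt hu

theorem expInvIntegral_nonneg (θ : ℝ) : 0 ≤ expInvIntegral θ :=
  setIntegral_nonneg measurableSet_Ioi fun _ _ => by positivity

theorem expInvIntegral_zero : expInvIntegral 0 = 1 := by
  simp only [expInvIntegral, neg_zero, zero_div, exp_zero, mul_one]
  exact integral_exp_neg_Ioi_zero

/-- **Monotonicity of the Bessel kernel radial profile** (Lemma 7, profile property).
For every `γ ≥ 0` the profile `g_γ` is nonincreasing on `(0,∞)` and takes values in
`[0,1]` there. -/
theorem besselProfile_antitone_and_bounded (γ : ℝ) (hγ : 0 ≤ γ) :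
    AntitoneOn (fun r => besselProfile γ r) (Ioi 0) ∧
    (∀ r : ℝ, 0 < r → 0 ≤ besselProfile γ r ∧ besselProfile γ r ≤ 1) := by
  have hθ : ∀ r : ℝ, γ * (r ^ 2 / 4) ∈ Ici 0 := fun r => mem_Ici.mpr (by positivity)
  refine ⟨fun a ha b hb hab => ?_, fun r hr => ?_⟩
  · have hab' : γ * (a ^ 2 / 4) ≤ γ * (b ^ 2 / 4) := by
      have ha : (0 : ℝ) < a := ha
      gcongr
    simp only [besselProfile_eq_expInvIntegral γ ha, besselProfile_eq_expInvIntegral γ hb]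
    exact antitoneOn_expInvIntegral (hθ a) (hθ b) hab'
  · rw [besselProfile_eq_expInvIntegral γ hr]
    refine ⟨expInvIntegral_nonneg _, ?_⟩
    calc expInvIntegral (γ * (r ^ 2 / 4)) ≤ expInvIntegral 0 :=
          antitoneOn_expInvIntegral self_mem_Ici (hθ r) (hθ r)
      _ = 1 := expInvIntegral_zero
end
end
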